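/- Let H ≤ S_d act transitively on {1,…,d}, and let G = (H^n) ⋊ S_n (the wreath product) act on ℝ^{n×d} by ((h₁,…,h_n,σ)·X)_{ij} = X_{σ⁻¹(i), h_i⁻¹(j)}. Then every linear G-equivariant map L : ℝ^{n×d} → ℝ^{n×d} has the form L(X)_i = L₁(x_i) + β·(Σ_{j=1}^n Σ_{k=1}^d X_{jk})·𝟙_d, where L₁ : ℝ^d → ℝ^d is linear H-equivariant, β ∈ ℝ, and 𝟙_d is the all-ones vector. The dimension of this space is E(H) + 1. -/

import Mathlib

/-- A linear map `M : ℝ^d → ℝ^d` is `H`-equivariant for `H ≤ S_d` acting by permuting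
coordinates. -/
def IsHEquivariant {d : ℕ} (H : Subgroup (Equiv.Perm (Fin d)))
    (M : (Fin d → ℝ) →ₗ[ℝ] (Fin d → ℝ)) : Prop :=
  ∀ h ∈ H, ∀ x : Fin d → ℝ, (M fun j => x (h⁻¹ j)) = fun j => M x (h⁻¹ j)

/-- The submodule of linear endomorphisms of `α → ℝ` that are equivariant with respect to the
permutation action of a subgroup `G` of the symmetric group. -/
noncomputable def equivSubmodule {α : Type*} [Fintype α] [DecidableEq α]
    (G : Subgroup (Equiv.Perm α)) :
    Submodule ℝ ((α → ℝ) →ₗ[ℝ] (α → ℝ)) where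
  carrier := {L | ∀ g ∈ G, ∀ x : α → ℝ, (L fun i => x (g⁻¹ i)) = fun i => L x (g⁻¹ i)}
  add_mem' := by
    intro L M hL hM g hg x
    simp only [LinearMap.add_apply, hL g hg x, hM g hg x]
    rfl
  zero_mem' := by intro g hg x; simp; rfl
  smul_mem' := by
    intro c L hL g hg x
    simp only [LinearMap.smul_apply, hL g hg x]
    rfl

/-- The submodule of linear endomorphisms of `ℝ^{n×d}` equivariant to the wreath product
`G = Hⁿ ⋊ S_n` acting by `((h₁,…,h_n,σ)·X)_{ij} = X_{σ⁻¹(i), h_i⁻¹(j)}`. -/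
noncomputable def wreathSubmodule {n d : ℕ} (H : Subgroup (Equiv.Perm (Fin d))) :
    Submodule ℝ ((Fin n → Fin d → ℝ) →ₗ[ℝ] (Fin n → Fin d → ℝ)) where
  carrier := {L | ∀ (σ : Equiv.Perm (Fin n)) (h : Fin n → Equiv.Perm (Fin d)),
    (∀ i, h i ∈ H) → ∀ X : Fin n → Fin d → ℝ,
    (L fun i => fun j => X (σ⁻¹ i) ((h i)⁻¹ j)) = fun i => fun j => L X (σ⁻¹ i) ((h i)⁻¹ j)}
  add_mem' := by
    intro L M hL hM σ h hh X
    simp only [LinearMap.add_apply, hL σ h hh X, hM σ h hh X]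
    rfl
  zero_mem' := by intro σ h hh X; simp; rfl
  smul_mem' := by
    intro c L hL σ h hh X
    simp only [LinearMap.smul_apply, hL σ h hh X]
    rfl

/-!
Write `L` as an `n × n` array of blocks `L_{ia} : ℝ^d → ℝ^d`. Equivariance under `S_n` makes all
diagonal blocks equal to one block `D` and, `S_n` being 2-transitive, all off-diagonal blocks equal
to one block `O`. Equivariance under `Hⁿ` makes every block `H`-equivariant; an off-diagonal block
is moreover acted on by two independent copies of `H`, so it is `H`-invariant on each side
separately, and transitivity forces `O = β J` with `J` the all-ones matrix. Hence
`L(X)ᵢ = (D - O)(xᵢ) + β (∑ X) 𝟙`. Conversely all such maps are equivariant, and with two rows and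
one column the pair `(D - O, β)` is recovered from `L`, which gives the dimension `E(H) + 1`.
-/

theorem Equiv.Perm.exists_apply_eq_and_apply_eq {α : Type*} [DecidableEq α] {i a i' a' : α}
    (h : i ≠ a) (h' : i' ≠ a') : ∃ σ : Equiv.Perm α, σ i = i' ∧ σ a = a' := by
  set τ := Equiv.swap i i'
  have hτa : τ a ≠ i' := fun hτ => h (τ.injective ((Equiv.swap_apply_left i i').trans hτ.symm))
  refine ⟨Equiv.swap (τ a) a' * τ, ?_, ?_⟩
  · simp [τ, Equiv.swap_apply_of_ne_of_ne hτa.symm h']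
  · simp [Equiv.swap_apply_left]

theorem Pi.single_comp_perm_inv {ι β : Type*} [DecidableEq ι] [Zero β] (σ : Equiv.Perm ι)
    (i : ι) (x : β) : (fun k => (Pi.single i x : ι → β) (σ⁻¹ k)) = (Pi.single (σ i) x : ι → β) :=
  Pi.single_comp_equiv σ.symm i x

theorem LinearMap.apply_eq_sum_mul_apply_single {α : Type*} [Fintype α] [DecidableEq α]
    (M : (α → ℝ) →ₗ[ℝ] (α → ℝ)) (x : α → ℝ) (j : α) :
    M x j = ∑ b, x b * M (Pi.single b 1) j := by
  simp [LinearMap.pi_apply_eq_sum_univ M x, Finset.sum_apply, ← Pi.single_apply, Pi.single_comm]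

theorem LinearMap.exists_apply_eq_mul_sum_of_invariant {α : Type*} [Fintype α] [DecidableEq α]
    {G : Subgroup (Equiv.Perm α)} (htrans : ∀ j k : α, ∃ g ∈ G, g j = k)
    {M : (α → ℝ) →ₗ[ℝ] (α → ℝ)}
    (hin : ∀ g ∈ G, ∀ x : α → ℝ, (M fun j => x (g⁻¹ j)) = M x)
    (hout : ∀ g ∈ G, ∀ x : α → ℝ, (fun j => M x (g⁻¹ j)) = M x) :
    ∃ β : ℝ, ∀ x j, M x j = β * ∑ b, x b := by
  rcases isEmpty_or_nonempty α with hα | ⟨⟨j₀⟩⟩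
  · exact ⟨0, fun _ j => isEmptyElim j⟩
  set c : α → α → ℝ := fun j b => M (Pi.single b 1) j
  have hc_out : ∀ g ∈ G, ∀ j b, c (g j) b = c j b := fun g hg j b => by
    simpa using (congrFun (hout g hg (Pi.single b 1)) (g j)).symm
  have hc_in : ∀ g ∈ G, ∀ j b, c j (g b) = c j b := fun g hg j b => by
    simpa only [Pi.single_comp_perm_inv] using congrFun (hin g hg (Pi.single b 1)) j
  have hc : ∀ j b, c j b = c j₀ j₀ := fun j b => by
    obtain ⟨g, hg, rfl⟩ := htrans j₀ j
    obtain ⟨g', hg', rfl⟩ := htrans j₀ b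
    rw [hc_out g hg, hc_in g' hg']
  refine ⟨c j₀ j₀, fun x j => ?_⟩
  rw [M.apply_eq_sum_mul_apply_single, Finset.mul_sum]
  exact Finset.sum_congr rfl fun b _ => by rw [← hc j b, mul_comm]

namespace LinearMap

variable {ι α : Type*} [DecidableEq ι]

def block (L : (ι → α → ℝ) →ₗ[ℝ] (ι → α → ℝ)) (i a : ι) : (α → ℝ) →ₗ[ℝ] (α → ℝ) :=
  LinearMap.proj i ∘ₗ L ∘ₗ LinearMap.single ℝ (fun _ => α → ℝ) a

theorem apply_eq_sum_block [Fintype ι] (L : (ι → α → ℝ) →ₗ[ℝ] (ι → α → ℝ)) (X : ι → α → ℝ)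
    (i : ι) : L X i = ∑ a, L.block i a (X a) := by
  conv_lhs => rw [← Finset.univ_sum_single X]
  simp [block, map_sum]

end LinearMap

section Layer

variable {ι α : Type*} [Fintype ι] [Fintype α]

def wreathLayer : ((α → ℝ) →ₗ[ℝ] (α → ℝ)) × ℝ →ₗ[ℝ] ((ι → α → ℝ) →ₗ[ℝ] (ι → α → ℝ)) where
  toFun p :=
    { toFun := fun X i j => p.1 (X i) j + p.2 * ∑ a, ∑ b, X a b
      map_add' := fun X Y => by
        funext i j
        simp only [Pi.add_apply, map_add, Finset.sum_add_distrib]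
        ring
      map_smul' := fun r X => by
        funext i j
        simp only [Pi.smul_apply, map_smul, smul_eq_mul, ← Finset.mul_sum, RingHom.id_apply]
        ring }
  map_add' p q := by
    ext X i j
    simp only [LinearMap.coe_mk, AddHom.coe_mk, Prod.fst_add, Prod.snd_add, LinearMap.add_apply,
      Pi.add_apply]
    ring
  map_smul' r p := by
    ext X i j
    simp only [LinearMap.coe_mk, AddHom.coe_mk, Prod.smul_fst, Prod.smul_snd, LinearMap.smul_apply,
      Pi.smul_apply, smul_eq_mul, RingHom.id_apply]
    ring

theorem wreathLayer_apply (p : ((α → ℝ) →ₗ[ℝ] (α → ℝ)) × ℝ) (X : ι → α → ℝ) (i : ι) (j : α) :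
    wreathLayer p X i j = p.1 (X i) j + p.2 * ∑ a, ∑ b, X a b :=
  rfl

theorem wreathLayer_injective [Nontrivial ι] [Nonempty α] :
    Function.Injective (wreathLayer : _ →ₗ[ℝ] ((ι → α → ℝ) →ₗ[ℝ] (ι → α → ℝ))) := by
  rw [← LinearMap.ker_eq_bot, LinearMap.ker_eq_bot']
  classical
  rintro ⟨M, β⟩ hMβ
  have hzero : ∀ (X : ι → α → ℝ) i j, M (X i) j + β * ∑ a, ∑ b, X a b = 0 := fun X i j =>
    congrFun (congrFun (LinearMap.congr_fun hMβ X) i) j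
  obtain ⟨i, a, hia⟩ := exists_pair_ne ι
  obtain ⟨j⟩ := ‹Nonempty α›
  have hβ : β = 0 := by
    have hsum : ∑ p, ∑ b, (Pi.single a (Pi.single j 1) : ι → α → ℝ) p b = 1 := by
      rw [Fintype.sum_eq_single a fun p hp => by simp [hp]]
      simp
    simpa [hia, hsum] using hzero (Pi.single a (Pi.single j 1)) i j
  have hM : M = 0 := LinearMap.ext fun x => funext fun j => by
    simpa [hβ] using hzero (fun _ => x) i j
  simp [hM, hβ]

theorem eq_wreathLayer_of_block_eq [DecidableEq ι] {L : (ι → α → ℝ) →ₗ[ℝ] (ι → α → ℝ)}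
    {D O : (α → ℝ) →ₗ[ℝ] (α → ℝ)} {β : ℝ} (hdiag : ∀ i, L.block i i = D)
    (hoff : ∀ i a, i ≠ a → L.block i a = O) (hO : ∀ y j, O y j = β * ∑ b, y b) :
    L = wreathLayer (D - O, β) := by
  refine LinearMap.ext fun X => funext fun i => funext fun j => ?_
  calc L X i j = ∑ a, L.block i a (X a) j := by rw [L.apply_eq_sum_block, Finset.sum_apply]
    _ = D (X i) j + β * ∑ a ∈ {i}ᶜ, ∑ b, X a b := by
      rw [Fintype.sum_eq_add_sum_compl i, hdiag, Finset.mul_sum]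
      congr 1
      refine Finset.sum_congr rfl fun a ha => ?_
      rw [hoff i a (Ne.symm (by simpa using ha)), hO]
    _ = wreathLayer (D - O, β) X i j := by
      rw [wreathLayer_apply, Fintype.sum_eq_add_sum_compl i fun a => ∑ b, X a b,
        LinearMap.sub_apply, Pi.sub_apply, hO]
      ring

end Layer

section Wreath

variable {n d : ℕ} {H : Subgroup (Equiv.Perm (Fin d))}
  {L : (Fin n → Fin d → ℝ) →ₗ[ℝ] (Fin n → Fin d → ℝ)}

theorem block_perm_apply_perm_apply (hL : L ∈ wreathSubmodule H) (σ : Equiv.Perm (Fin n))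
    (i a : Fin n) : L.block (σ i) (σ a) = L.block i a := by
  refine LinearMap.ext fun x => ?_
  have key : L (Pi.single (σ a) x) = fun p => L (Pi.single a x) (σ⁻¹ p) := by
    rw [← Pi.single_comp_perm_inv]
    exact hL σ 1 (fun _ => H.one_mem) (Pi.single a x)
  simpa [LinearMap.block] using congrFun key (σ i)

theorem block_apply_perm (hL : L ∈ wreathSubmodule H) {h : Fin n → Equiv.Perm (Fin d)}
    (hh : ∀ i, h i ∈ H) (i a : Fin n) (x : Fin d → ℝ) :
    (L.block i a fun j => x ((h a)⁻¹ j)) = fun j => L.block i a x ((h i)⁻¹ j) := by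
  have harg : (fun p q => (Pi.single a x : Fin n → Fin d → ℝ) p ((h p)⁻¹ q))
      = Pi.single a fun q => x ((h a)⁻¹ q) := by
    funext p
    rcases eq_or_ne p a with rfl | hp
    · simp
    · simp [hp, Pi.zero_def]
  have key : L (Pi.single a fun q => x ((h a)⁻¹ q)) =
      fun p q => L (Pi.single a x) p ((h p)⁻¹ q) := by
    rw [← harg]
    exact hL 1 h hh (Pi.single a x)
  exact congrFun key i

theorem block_mem_equivSubmodule (hL : L ∈ wreathSubmodule H) (i a : Fin n) :
    L.block i a ∈ equivSubmodule H :=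
  fun g hg => block_apply_perm hL (h := fun _ => g) (fun _ => hg) i a

theorem block_diag_eq (hL : L ∈ wreathSubmodule H) (i i' : Fin n) :
    L.block i i = L.block i' i' := by
  simpa using block_perm_apply_perm_apply hL (Equiv.swap i' i) i' i'

theorem block_eq_of_ne (hL : L ∈ wreathSubmodule H) {i a i' a' : Fin n} (h : i ≠ a)
    (h' : i' ≠ a') : L.block i a = L.block i' a' := by
  obtain ⟨σ, rfl, rfl⟩ := Equiv.Perm.exists_apply_eq_and_apply_eq h' h
  exact block_perm_apply_perm_apply hL σ i' a'

/-- Acting by `g` on row `a` alone, or on row `i` alone, makes an off-diagonal block invariant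
on either side. -/
theorem exists_block_apply_eq_mul_sum (hL : L ∈ wreathSubmodule H)
    (htrans : ∀ j k : Fin d, ∃ h ∈ H, h j = k) {i a : Fin n} (hia : i ≠ a) :
    ∃ β : ℝ, ∀ x j, L.block i a x j = β * ∑ b, x b := by
  have hupdate : ∀ {g} (r : Fin n), g ∈ H → ∀ p, Function.update (1 : Fin n → _) r g p ∈ H :=
    fun r hg p => by
      rcases eq_or_ne p r with rfl | hp
      · simpa using hg
      · simp [hp]
  refine LinearMap.exists_apply_eq_mul_sum_of_invariant htrans (fun g hg x => ?_) fun g hg x => ?_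
  · simpa [hia] using block_apply_perm hL (hupdate a hg) i a x
  · simpa [hia.symm] using (block_apply_perm hL (hupdate i hg) i a x).symm

theorem wreathLayer_mem_wreathSubmodule {M : (Fin d → ℝ) →ₗ[ℝ] (Fin d → ℝ)}
    (hM : M ∈ equivSubmodule H) (β : ℝ) : wreathLayer (M, β) ∈ wreathSubmodule (n := n) H := by
  intro σ h hh X
  funext i j
  simp only [wreathLayer_apply]
  congr 1
  · exact congrFun (hM (h i) (hh i) (X (σ⁻¹ i))) j
  · rw [Finset.sum_congr rfl fun a _ => Equiv.sum_comp (h a)⁻¹ (X (σ⁻¹ a)),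
      Equiv.sum_comp σ⁻¹ fun a => ∑ b, X a b]

theorem wreathSubmodule_eq_range (hn : 2 ≤ n) (htrans : ∀ j k : Fin d, ∃ h ∈ H, h j = k) :
    wreathSubmodule (n := n) H =
      LinearMap.range (wreathLayer ∘ₗ (equivSubmodule H).subtype.prodMap LinearMap.id) := by
  refine le_antisymm (fun L hL => ?_) ?_
  · have : Nontrivial (Fin n) := Fin.nontrivial_iff_two_le.mpr hn
    obtain ⟨i₀, i₁, h₀₁⟩ := exists_pair_ne (Fin n)
    obtain ⟨β, hβ⟩ := exists_block_apply_eq_mul_sum hL htrans h₀₁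
    refine ⟨(⟨L.block i₀ i₀ - L.block i₀ i₁, sub_mem (block_mem_equivSubmodule hL _ _)
      (block_mem_equivSubmodule hL _ _)⟩, β), ?_⟩
    exact (eq_wreathLayer_of_block_eq (fun i => block_diag_eq hL i i₀)
      (fun i a hia => block_eq_of_ne hL hia h₀₁) hβ).symm
  · rintro _ ⟨⟨M, β⟩, rfl⟩
    exact wreathLayer_mem_wreathSubmodule M.2 β

end Wreath

/-- **Equivariant layers for the wreath product action.** If `H ≤ S_d` acts transitively on
`{1,…,d}` and `n ≥ 2`, `d ≥ 1`, then every linear map `L : ℝ^{n×d} → ℝ^{n×d}` equivariant to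
the wreath product `Hⁿ ⋊ S_n` has the form
`L(X)ᵢ = L₁(xᵢ) + β (∑_{j,k} X_{jk}) 𝟙_d` with `L₁` linear `H`-equivariant and `β ∈ ℝ`;
moreover, the space of such equivariant maps has dimension `E(H) + 1`. -/
theorem wreath_equivariant_characterization {n d : ℕ} (hn : 2 ≤ n) (hd : 0 < d)
    (H : Subgroup (Equiv.Perm (Fin d)))
    (htrans : ∀ j k : Fin d, ∃ h ∈ H, h j = k) :
    (∀ L ∈ wreathSubmodule (n := n) H,
      ∃ (L₁ : (Fin d → ℝ) →ₗ[ℝ] (Fin d → ℝ)) (β : ℝ), IsHEquivariant H L₁ ∧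
        ∀ (X : Fin n → Fin d → ℝ) (i : Fin n) (j : Fin d),
          L X i j = L₁ (X i) j + β * ∑ a : Fin n, ∑ b : Fin d, X a b) ∧
      Module.finrank ℝ (wreathSubmodule (n := n) H) =
        Module.finrank ℝ (equivSubmodule H) + 1 := by
  rw [wreathSubmodule_eq_range hn htrans]
  refine ⟨?_, ?_⟩
  · rintro _ ⟨⟨⟨M, hM⟩, β⟩, rfl⟩
    exact ⟨M, β, hM, fun X i j => rfl⟩
  · have : Nontrivial (Fin n) := Fin.nontrivial_iff_two_le.mpr hn
    have : Nonempty (Fin d) := Fin.pos_iff_nonempty.mp hd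
    have hinj : Function.Injective
        (wreathLayer ∘ₗ (equivSubmodule H).subtype.prodMap (LinearMap.id : ℝ →ₗ[ℝ] ℝ) :
          _ →ₗ[ℝ] ((Fin n → Fin d → ℝ) →ₗ[ℝ] _)) := by
      rw [LinearMap.coe_comp, LinearMap.coe_prodMap]
      exact wreathLayer_injective.comp (Subtype.val_injective.prodMap Function.injective_id)
    have := Module.Free.of_divisionRing ℝ (equivSubmodule H)
    rw [LinearMap.finrank_range_of_inj hinj, Module.finrank_prod, Module.finrank_self]
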